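/- arXiv:1810.11700 — 3 statements merged into one kernel-verified Lean document; each statement's English description precedes it below -/
import Mathlib

section
/- Every graph that is a proper k-path contains a Hamiltonian path; consequently, every proper k-path with an even number of vertices contains a perfect matching. -/
open SimpleGraph

/-- A vertex `v` is simplicial in the subgraph of `G` induced by `s` if `v ∈ s`
and the neighborhood of `v` inside `s` induces a complete graph. -/
def IsSimplicialIn {V : Type*} (G : SimpleGraph V) (s : Set V) (v : V) : Prop :=
  v ∈ s ∧ ∀ u ∈ s, ∀ w ∈ s, G.Adj v u → G.Adj v w → u ≠ w → G.Adj u w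

/-- A vertex `v` is `k`-simplicial in the subgraph of `G` induced by `s` if `v ∈ s`
and the neighborhood of `v` inside `s` induces a complete graph on `k` vertices. -/
def IsKSimplicialIn {V : Type*} (G : SimpleGraph V) (s : Set V) (k : ℕ) (v : V) : Prop :=
  v ∈ s ∧ {u ∈ s | G.Adj v u}.ncard = k ∧
    ∀ u ∈ s, ∀ w ∈ s, G.Adj v u → G.Adj v w → u ≠ w → G.Adj u w

/-- Proper `k`-paths (as vertex sets `s` of induced subgraphs of an ambient graph
`G`), defined recursively: the complete graph on `k+1` vertices is a proper
`k`-path; a graph on more than `k+1` vertices is a proper `k`-path if it contains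
a `k`-simplicial vertex `v` whose removal results in a proper `k`-path having a
simplicial vertex in the neighborhood of `v`. -/
inductive IsProperKPath {V : Type*} (G : SimpleGraph V) (k : ℕ) : Set V → Prop
  | base (s : Set V) (hcard : s.ncard = k + 1)
      (hcomplete : ∀ u ∈ s, ∀ w ∈ s, u ≠ w → G.Adj u w) : IsProperKPath G k s
  | step (s : Set V) (v : V) (hv : v ∈ s) (hbig : k + 1 < s.ncard)
      (hksimp : IsKSimplicialIn G s k v)
      (hrec : IsProperKPath G k (s \ {v}))
      (hsimp : ∃ w ∈ s \ {v}, G.Adj v w ∧ IsSimplicialIn G (s \ {v}) w) :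
      IsProperKPath G k s

/-!
Hamiltonian paths are built along the recursive construction, keeping one end at a prescribed
simplicial vertex `w`. When `v` is added onto the simplicial vertex `w₀` of `s \ {v}`: if `w = v`,
prepend `v` to a path starting at `w₀`. Otherwise `w` is not adjacent to `v`, because every vertex
of a proper `k`-path has at least `k` neighbours and a simplicial one at most `k`; so `w` is
simplicial in `s \ {v}` and we take a path from `w` there. The neighbours of `v` other than `w₀`
are `k - 1` of the at most `k` neighbours of `w₀`, so all path-neighbours of `w₀` but at most one
are adjacent to `v`; as `w₀` has a predecessor on the path, `v` can be inserted next to `w₀`.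
Alternate edges of a Hamiltonian path form a perfect matching.
-/

namespace SimpleGraph

variable {V : Type*} {G : SimpleGraph V} {s : Set V}

variable (G) in
structure IsHamiltonianListOn (s : Set V) (l : List V) : Prop where
  nodup : l.Nodup
  mem_iff : ∀ x, x ∈ l ↔ x ∈ s
  isChain : l.IsChain G.Adj

lemma exists_isHamiltonianListOn_of_pairwise_adj (hs : s.Finite)
    (hadj : ∀ u ∈ s, ∀ w ∈ s, u ≠ w → G.Adj u w) : ∃ l, G.IsHamiltonianListOn s l := by
  refine ⟨hs.toFinset.toList, ⟨Finset.nodup_toList _, by simp, ?_⟩⟩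
  refine ((Finset.nodup_toList _).imp_of_mem fun ha hb hne => hadj _ ?_ _ ?_ hne).isChain
  · simpa using ha
  · simpa using hb

namespace IsHamiltonianListOn

lemma insert_middle {v : V} {A B : List V} (hl : G.IsHamiltonianListOn (s \ {v}) (A ++ B))
    (hv : v ∈ s) (hA : ∀ a ∈ A.getLast?, G.Adj a v) (hB : ∀ b ∈ B.head?, G.Adj v b) :
    G.IsHamiltonianListOn s (A ++ v :: B) where
  nodup := List.nodup_middle.2 <|
    List.nodup_cons.2 ⟨fun h => ((hl.mem_iff v).1 h).2 rfl, hl.nodup⟩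
  mem_iff x := by
    rw [List.perm_middle.mem_iff, List.mem_cons, hl.mem_iff]
    by_cases hx : x = v <;> simp [hx, hv]
  isChain := by
    have hchain := hl.isChain
    rw [List.isChain_append] at hchain ⊢
    refine ⟨hchain.1, List.isChain_cons.2 ⟨hB, hchain.2.1⟩, ?_⟩
    rintro a ha b ⟨⟩
    exact hA a ha

lemma exists_insert_next_to {l : List V} {v w w₀ : V}
    (hl : G.IsHamiltonianListOn (s \ {v}) l) (hhead : l.head? = some w) (hw₀ : w₀ ∈ l)
    (hww₀ : w ≠ w₀) (hv : v ∈ s) (hvw₀ : G.Adj v w₀)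
    (hN : {u ∈ s \ {v} | G.Adj w₀ u ∧ ¬ G.Adj v u}.Subsingleton) :
    ∃ l', G.IsHamiltonianListOn s l' ∧ l'.head? = some w := by
  obtain ⟨A, B, rfl⟩ := List.append_of_mem hw₀
  have hA : A ≠ [] := by
    rintro rfl
    exact hww₀ (by simpa using hhead.symm)
  have hhead' (C : List V) : (A ++ C).head? = some w := by
    rwa [List.head?_append_of_ne_nil _ hA, ← List.head?_append_of_ne_nil _ hA]
  set p := A.getLast hA
  have hpA : p ∈ A := List.getLast_mem hA
  have hpw₀ : G.Adj p w₀ := hl.isChain.rel_getLast_head_of_append hA (List.cons_ne_nil _ _)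
  by_cases hvp : G.Adj v p
  · refine ⟨A ++ v :: w₀ :: B, hl.insert_middle hv ?_ (by simpa using hvw₀), hhead' _⟩
    simpa [List.getLast?_eq_some_getLast hA] using hvp.symm
  have hB : ∀ q ∈ B.head?, G.Adj v q := by
    intro q hq
    have hqB : q ∈ B := List.mem_of_mem_head? hq
    have hpq : p ≠ q :=
      (List.nodup_append.1 hl.nodup).2.2 p hpA q (List.mem_cons_of_mem _ hqB)
    by_contra hvq
    refine hpq (hN ⟨(hl.mem_iff p).1 (by simp [hpA]), hpw₀.symm, hvp⟩
      ⟨(hl.mem_iff q).1 (by simp [hqB]), ?_, hvq⟩)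
    exact hl.isChain.right_of_append.rel_head? hq
  rw [← List.singleton_append, ← List.append_assoc] at hl
  refine ⟨(A ++ [w₀]) ++ v :: B, hl.insert_middle hv (by simpa using hvw₀.symm) hB, ?_⟩
  simpa using hhead' (w₀ :: v :: B)

lemma exists_isHamiltonian_induce [DecidableEq V] {l : List V}
    (hl : G.IsHamiltonianListOn s l) (hne : l ≠ []) :
    ∃ (u w : s) (p : (G.induce s).Walk u w), p.IsHamiltonian := by
  set L := l.attachWith (· ∈ s) fun x hx => (hl.mem_iff x).1 hx
  have hL : L.IsChain (G.induce s).Adj :=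
    List.isChain_attachWith _ |>.2 <| hl.isChain.imp_of_mem_imp fun a b ha hb hab =>
      ⟨(hl.mem_iff a).1 ha, (hl.mem_iff b).1 hb, hab⟩
  refine ⟨_, _, Walk.ofSupport L (by simpa [L] using hne) hL, fun x => ?_⟩
  rw [Walk.support_ofSupport]
  -- `IsHamiltonian` counts with the `BEq` instance derived from `DecidableEq`
  exact @List.count_eq_one_of_mem _ instBEqOfDecidableEq _ _ _
    (.of_map Subtype.val (by simpa [L] using hl.nodup)) (by simp [L, hl.mem_iff])

end IsHamiltonianListOn

theorem exists_isMatching_of_isChain :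
    ∀ {l : List V}, l.IsChain G.Adj → l.Nodup → Even l.length →
      ∃ M : G.Subgraph, M.verts = {x | x ∈ l} ∧ M.IsMatching
  | [], _, _, _ => ⟨⊥, by simp, fun v hv => absurd hv (by simp)⟩
  | [x], _, _, he => by simp at he
  | x :: y :: r, hc, hn, he => by
    obtain ⟨hxy, hc⟩ := List.isChain_cons_cons.1 hc
    obtain ⟨hx, hy, hn⟩ : x ∉ y :: r ∧ y ∉ r ∧ r.Nodup := by
      simp only [List.nodup_cons] at hn
      exact ⟨hn.1, hn.2.1, hn.2.2⟩
    obtain ⟨M, hMv, hM⟩ :=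
      exists_isMatching_of_isChain hc.tail hn (by simpa [parity_simps] using he)
    refine ⟨G.subgraphOfAdj hxy ⊔ M, ?_, (Subgraph.IsMatching.subgraphOfAdj hxy).sup hM ?_⟩
    · ext z
      simp [hMv, or_assoc]
    · rw [support_subgraphOfAdj, hM.support_eq_verts, hMv, Set.disjoint_left]
      rintro z (rfl | rfl) hz
      exacts [hx (List.mem_cons_of_mem _ hz), hy hz]

theorem Walk.IsHamiltonian.exists_isPerfectMatching [DecidableEq V] {u w : V} {p : G.Walk u w}
    (hp : p.IsHamiltonian) (h : Even (Nat.card V)) : ∃ M : G.Subgraph, M.IsPerfectMatching := by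
  have := hp.fintype
  rw [Nat.card_eq_fintype_card, ← hp.length_support] at h
  obtain ⟨M, hMv, hM⟩ :=
    exists_isMatching_of_isChain p.isChain_adj_support hp.isPath.support_nodup h
  exact ⟨M, hM, fun x => hMv ▸ hp.mem_support x⟩

end SimpleGraph

section KPath

variable {V : Type*} {G : SimpleGraph V} {k : ℕ} {s : Set V}

lemma IsSimplicialIn.of_subset {t : Set V} {w : V} (hw : IsSimplicialIn G s w) (hwt : w ∈ t)
    (hts : t ⊆ s) : IsSimplicialIn G t w :=
  ⟨hwt, fun u hu x hx => hw.2 u (hts hu) x (hts hx)⟩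

namespace IsProperKPath

lemma finite (h : IsProperKPath G k s) : s.Finite := by
  cases h <;> exact Set.finite_of_ncard_pos (by omega)

lemma exists_isSimplicialIn (h : IsProperKPath G k s) : ∃ w, IsSimplicialIn G s w := by
  cases h with
  | base s hcard hcomplete =>
    obtain ⟨w, hw⟩ := Set.nonempty_of_ncard_ne_zero (s := s) (by omega)
    exact ⟨w, hw, fun u hu x hx _ _ => hcomplete u hu x hx⟩
  | step s v hv _ hksimp => exact ⟨v, hv, hksimp.2.2⟩

lemma le_ncard_neighbors (h : IsProperKPath G k s) {x : V} (hx : x ∈ s) :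
    k ≤ {u ∈ s | G.Adj x u}.ncard := by
  induction h with
  | base s hcard hcomplete =>
    have : {u ∈ s | G.Adj x u} = s \ {x} := by
      ext u
      simp only [Set.mem_sep_iff, Set.mem_sdiff, Set.mem_singleton_iff]
      exact ⟨fun h => ⟨h.1, (G.ne_of_adj h.2).symm⟩,
        fun h => ⟨h.1, hcomplete x hx u h.1 (Ne.symm h.2)⟩⟩
    rw [this, Set.ncard_sdiff_singleton_of_mem hx, hcard]
    omega
  | step s v _ _ hksimp hrec _ ih =>
    rcases eq_or_ne x v with rfl | hxv
    · exact hksimp.2.1.ge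
    · have := (hrec.finite.of_sdiff (Set.finite_singleton v)).to_subtype
      exact (ih ⟨hx, hxv⟩).trans <| Set.ncard_le_ncard fun u hu => ⟨hu.1.1, hu.2⟩

lemma ncard_neighbors_le (h : IsProperKPath G k s) {w : V} (hw : IsSimplicialIn G s w) :
    {u ∈ s | G.Adj w u}.ncard ≤ k := by
  induction h with
  | base s hcard _ =>
    have := (Set.finite_of_ncard_pos (s := s) (by omega)).to_subtype
    calc {u ∈ s | G.Adj w u}.ncard ≤ (s \ {w}).ncard :=
          Set.ncard_le_ncard fun u hu => ⟨hu.1, (G.ne_of_adj hu.2).symm⟩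
      _ = k := by rw [Set.ncard_sdiff_singleton_of_mem hw.1, hcard, Nat.add_sub_cancel]
  | step s v hv _ hksimp hrec _ ih =>
    have := (hrec.finite.of_sdiff (Set.finite_singleton v)).to_subtype
    rcases eq_or_ne w v with rfl | hwv
    · exact hksimp.2.1.le
    by_cases hwv' : G.Adj w v
    · -- the neighbours of `w` other than `v` lie in the clique around `v`
      have hwN : w ∈ {u ∈ s | G.Adj v u} := ⟨hw.1, hwv'.symm⟩
      calc {u ∈ s | G.Adj w u}.ncard ≤ (insert v ({u ∈ s | G.Adj v u} \ {w})).ncard := by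
            refine Set.ncard_le_ncard fun u hu => ?_
            rcases eq_or_ne u v with rfl | huv
            · exact Set.mem_insert _ _
            · exact .inr ⟨⟨hu.1, hw.2 v hv u hu.1 hwv' hu.2 (Ne.symm huv)⟩,
                (G.ne_of_adj hu.2).symm⟩
        _ = k := by rw [Set.ncard_exchange (fun h => G.irrefl h.2) hwN, hksimp.2.1]
    · refine le_trans (Set.ncard_le_ncard fun u hu => ?_)
        (ih (hw.of_subset ⟨hw.1, hwv⟩ Set.sdiff_subset))
      exact ⟨⟨hu.1, by rintro rfl; exact hwv' hu.2⟩, hu.2⟩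

lemma not_adj_of_isSimplicialIn (h : IsProperKPath G k s) {v w : V} (hv : v ∈ s)
    (hrec : IsProperKPath G k (s \ {v})) (hw : IsSimplicialIn G s w) (hwv : w ≠ v) :
    ¬ G.Adj v w := by
  intro hvw
  have := h.finite.to_subtype
  have hv' : v ∉ {u ∈ s \ {v} | G.Adj w u} := fun hv' => hv'.1.2 rfl
  have : k + 1 ≤ k := calc
    k + 1 ≤ (insert v {u ∈ s \ {v} | G.Adj w u}).ncard := by
      rw [Set.ncard_insert_of_notMem hv']
      exact Nat.succ_le_succ (hrec.le_ncard_neighbors ⟨hw.1, hwv⟩)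
    _ ≤ {u ∈ s | G.Adj w u}.ncard := by
      refine Set.ncard_le_ncard ?_
      rintro u (rfl | hu)
      exacts [⟨hv, hvw.symm⟩, ⟨hu.1.1, hu.2⟩]
    _ ≤ k := h.ncard_neighbors_le hw
  omega

lemma subsingleton_neighbors_not_adj {v w₀ : V} (hrec : IsProperKPath G k (s \ {v}))
    (hksimp : IsKSimplicialIn G s k v) (hw₀ : IsSimplicialIn G (s \ {v}) w₀)
    (hvw₀ : G.Adj v w₀) : {u ∈ s \ {v} | G.Adj w₀ u ∧ ¬ G.Adj v u}.Subsingleton := by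
  rintro p ⟨hp, hw₀p, hvp⟩ q ⟨hq, hw₀q, hvq⟩
  by_contra hpq
  have := (hrec.finite.of_sdiff (Set.finite_singleton v)).to_subtype
  have hw₀N : w₀ ∈ {u ∈ s | G.Adj v u} := ⟨hw₀.1.1, hvw₀⟩
  have hp' : p ∉ insert q ({u ∈ s | G.Adj v u} \ {w₀}) := by
    rintro (rfl | hp')
    exacts [hpq rfl, hvp hp'.1.2]
  have : k + 1 ≤ k := calc
    k + 1 = (insert p (insert q ({u ∈ s | G.Adj v u} \ {w₀}))).ncard := by
      rw [Set.ncard_insert_of_notMem hp', Set.ncard_exchange (fun h => hvq h.2) hw₀N,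
        hksimp.2.1]
    _ ≤ {u ∈ s \ {v} | G.Adj w₀ u}.ncard := by
      refine Set.ncard_le_ncard ?_
      rintro u (rfl | rfl | ⟨⟨hu, hvu⟩, huw₀⟩)
      exacts [⟨hp, hw₀p⟩, ⟨hq, hw₀q⟩,
        ⟨⟨hu, (G.ne_of_adj hvu).symm⟩, hksimp.2.2 w₀ hw₀.1.1 u hu hvw₀ hvu (Ne.symm huw₀)⟩]
    _ ≤ k := hrec.ncard_neighbors_le hw₀
  omega

theorem exists_isHamiltonianListOn_head_eq (h : IsProperKPath G k s) {w : V}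
    (hw : IsSimplicialIn G s w) : ∃ l, G.IsHamiltonianListOn s l ∧ l.head? = some w := by
  induction h generalizing w with
  | base s hcard hcomplete =>
    have hs : s.Finite := Set.finite_of_ncard_pos (by omega)
    obtain ⟨l, hl⟩ := exists_isHamiltonianListOn_of_pairwise_adj (G := G) hs.sdiff
      fun u hu x hx => hcomplete u hu.1 x hx.1
    refine ⟨[] ++ w :: l, hl.insert_middle hw.1 (by simp) fun b hb => ?_, rfl⟩
    have hb' := (hl.mem_iff b).1 (List.mem_of_mem_head? hb)
    exact hcomplete w hw.1 b hb'.1 (Ne.symm hb'.2)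
  | step s v hv hbig hksimp hrec hsimp ih =>
    have hs := step s v hv hbig hksimp hrec hsimp
    obtain ⟨w₀, hw₀, hvw₀, hw₀simp⟩ := hsimp
    rcases eq_or_ne w v with rfl | hwv
    · obtain ⟨l, hl, hhead⟩ := ih hw₀simp
      exact ⟨[] ++ w :: l, hl.insert_middle hv (by simp) (by simpa [hhead] using hvw₀), rfl⟩
    have hvw : ¬ G.Adj v w := hs.not_adj_of_isSimplicialIn hv hrec hw hwv
    obtain ⟨l, hl, hhead⟩ := ih (hw.of_subset ⟨hw.1, hwv⟩ Set.sdiff_subset)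
    exact hl.exists_insert_next_to hhead ((hl.mem_iff w₀).2 hw₀) (by rintro rfl; exact hvw hvw₀)
      hv hvw₀ (subsingleton_neighbors_not_adj hrec hksimp hw₀simp hvw₀)

end IsProperKPath

end KPath

theorem stmt8 {V : Type*} [DecidableEq V] (G : SimpleGraph V) (k : ℕ) (s : Set V)
    (h : IsProperKPath G k s) :
    (∃ (u w : s) (p : (G.induce s).Walk u w), p.IsHamiltonian) ∧
    (Even s.ncard → ∃ M : (G.induce s).Subgraph, M.IsPerfectMatching) := by
  obtain ⟨w, hw⟩ := h.exists_isSimplicialIn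
  obtain ⟨l, hl, hhead⟩ := h.exists_isHamiltonianListOn_head_eq hw
  obtain ⟨u, u', p, hp⟩ := hl.exists_isHamiltonian_induce (by rintro rfl; simp at hhead)
  exact ⟨⟨u, u', p, hp⟩, fun heven => hp.exists_isPerfectMatching (by rwa [Nat.card_coe_set_eq])⟩
end

section
/- Let G be a graph on an even number n of vertices with pathwidth pw(G) ≤ k for some k ≥ 1. Then there exists a partition M of V(G) into pairs such that the multigraph G+M, obtained by adding an edge between the two vertices of each pair of M, satisfies pw(G+M) ≤ k+1. -/
open SimpleGraph

/-- `X : Fin n → Finset V` is a path decomposition of `G`: every vertex is in some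
bag, every edge has both endpoints in a common bag, and the bags containing any
fixed vertex form a contiguous interval. -/
def IsPathDecomp {V : Type*} (G : SimpleGraph V) (n : ℕ) (X : Fin n → Finset V) : Prop :=
  (∀ v : V, ∃ i, v ∈ X i) ∧
  (∀ u v : V, G.Adj u v → ∃ i, u ∈ X i ∧ v ∈ X i) ∧
  (∀ i j l : Fin n, i ≤ j → j ≤ l → ∀ v : V, v ∈ X i → v ∈ X l → v ∈ X j)

/-- The pathwidth of `G` is at most `k`: there is a path decomposition all of whose
bags have at most `k+1` vertices. -/
def pwLE {V : Type*} (G : SimpleGraph V) (k : ℕ) : Prop :=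
  ∃ (n : ℕ) (X : Fin n → Finset V), IsPathDecomp G n X ∧ ∀ i, (X i).card ≤ k + 1

/-!
Sort the vertices by the index of the last bag containing them and pair them consecutively,
`a t` with `b t`. To cover the new edge `a t b t`, carry `a t` forward from its last bag through
the last bag of `b t`. Since the sort makes these intervals of bags pairwise disjoint, each bag
gains at most one vertex, and the bags containing any vertex still form an interval.
-/

open Finset Function

def IsLastBag {V : Type*} {n : ℕ} (X : Fin n → Finset V) (last : V → Fin n) : Prop :=
  (∀ v, v ∈ X (last v)) ∧ ∀ v i, v ∈ X i → i ≤ last v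

theorem exists_isLastBag {V : Type*} {n : ℕ} {X : Fin n → Finset V}
    (hcover : ∀ v, ∃ i, v ∈ X i) : ∃ last, IsLastBag X last := by
  classical
  have hmax : ∀ v, ∃ i, v ∈ X i ∧ ∀ j, v ∈ X j → j ≤ i := fun v => by
    obtain ⟨i, hi⟩ := hcover v
    obtain ⟨i, hi, hmax⟩ := (univ.filter (v ∈ X ·)).exists_max_image id ⟨i, by simpa using hi⟩
    exact ⟨i, by simpa using hi, fun j hj => hmax j (by simpa using hj)⟩
  choose last hmem hle using hmax
  exact ⟨last, hmem, hle⟩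

theorem exists_equiv_fin_monotone_comp {V α : Type*} [Fintype V] [LinearOrder α] {N : ℕ}
    (f : V → α) (hN : Fintype.card V = N) : ∃ e : Fin N ≃ V, Monotone (f ∘ e) := by
  let e₀ : Fin N ≃ V := (Fintype.equivFinOfCardEq hN).symm
  exact ⟨(Tuple.sort (f ∘ e₀)).trans e₀, Tuple.monotone_sort (f ∘ e₀)⟩

theorem card_filter_mem_Ioc_le_one {ι α : Type*} [Fintype ι] [LinearOrder α] {l r : ι → α}
    (hdisj : Pairwise (Disjoint on fun t => Set.Ioc (l t) (r t))) (j : α) :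
    #(univ.filter fun t => j ∈ Set.Ioc (l t) (r t)) ≤ 1 := by
  refine card_le_one.mpr fun t ht t' ht' => by_contra fun hne => ?_
  exact Set.disjoint_left.mp (hdisj hne) (mem_filter.mp ht).2 (mem_filter.mp ht').2

section PairExtension

variable {V ι : Type*} [DecidableEq V] [Fintype ι] {G : SimpleGraph V} {n : ℕ}
  {X : Fin n → Finset V} {last : V → Fin n} (a b : ι → V)

def pairExtension (X : Fin n → Finset V) (last : V → Fin n) (j : Fin n) : Finset V :=
  X j ∪ (univ.filter fun t => j ∈ Set.Ioc (last (a t)) (last (b t))).image a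

theorem isPathDecomp_pairExtension (hX : IsPathDecomp G n X) (hlast : IsLastBag X last)
    (hab : ∀ t, last (a t) ≤ last (b t)) :
    IsPathDecomp (G ⊔ fromEdgeSet (Set.range fun t => s(a t, b t))) n
      (pairExtension a b X last) := by
  obtain ⟨hcover, hedge, hconvex⟩ := hX
  obtain ⟨hlast_mem, hlast_le⟩ := hlast
  have mem_ext {j v} : v ∈ pairExtension a b X last j ↔
      v ∈ X j ∨ ∃ t, j ∈ Set.Ioc (last (a t)) (last (b t)) ∧ a t = v := by
    simp [pairExtension]
  have pair_mem (t) : a t ∈ pairExtension a b X last (last (b t)) ∧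
      b t ∈ pairExtension a b X last (last (b t)) := by
    refine ⟨mem_ext.mpr ?_, mem_ext.mpr (.inl (hlast_mem _))⟩
    rcases (hab t).eq_or_lt with h | h
    · exact .inl (h ▸ hlast_mem _)
    · exact .inr ⟨t, ⟨h, le_rfl⟩, rfl⟩
  refine ⟨fun v => (hcover v).imp fun i hi => mem_ext.mpr (.inl hi), ?_, ?_⟩
  · rintro u v (huv | ⟨⟨t, ht⟩, -⟩)
    · exact (hedge u v huv).imp fun i hi => ⟨mem_ext.mpr (.inl hi.1), mem_ext.mpr (.inl hi.2)⟩
    · rcases Sym2.eq_iff.mp ht with ⟨rfl, rfl⟩ | ⟨rfl, rfl⟩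
      · exact ⟨_, pair_mem t⟩
      · exact ⟨_, (pair_mem t).symm⟩
  · intro i j l hij hjl v hi hl
    rw [mem_ext] at hi hl ⊢
    -- Bags up to `last v` contain `v` only through `X`; bags after it only through the extension.
    rcases le_or_gt j (last v) with hj | hj
    · refine .inl (hconvex i j (last v) hij hj v ?_ (hlast_mem v))
      rcases hi with hi | ⟨t, ht, rfl⟩
      · exact hi
      · exact absurd (hij.trans hj) (not_le.mpr ht.1)
    · rcases hl with hl | ⟨t, ht, rfl⟩
      · exact absurd ((hj.trans_le hjl).trans_le (hlast_le v l hl)) (lt_irrefl _)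
      · exact .inr ⟨t, ⟨hj, hjl.trans ht.2⟩, rfl⟩

theorem pwLE_sup_fromEdgeSet_range {k : ℕ} (hX : IsPathDecomp G n X)
    (hcard : ∀ i, #(X i) ≤ k + 1) (hlast : IsLastBag X last)
    (hab : ∀ t, last (a t) ≤ last (b t))
    (hdisj : Pairwise (Disjoint on fun t => Set.Ioc (last (a t)) (last (b t)))) :
    pwLE (G ⊔ fromEdgeSet (Set.range fun t => s(a t, b t))) (k + 1) := by
  refine ⟨n, _, isPathDecomp_pairExtension a b hX hlast hab, fun j => ?_⟩
  calc #(pairExtension a b X last j)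
      ≤ #(X j) + #(univ.filter fun t => j ∈ Set.Ioc (last (a t)) (last (b t))) :=
        (card_union_le _ _).trans (Nat.add_le_add_left card_image_le _)
    _ ≤ k + 1 + 1 := Nat.add_le_add (hcard j) (card_filter_mem_Ioc_le_one hdisj j)

end PairExtension

section Pairing

variable {V : Type*} {m : ℕ}

theorem existsUnique_mem_range_pair (p : Fin m × Fin 2 ≃ V) (v : V) :
    ∃! e, e ∈ Set.range (fun t => s(p (t, 0), p (t, 1))) ∧ v ∈ e := by
  obtain ⟨⟨t, i⟩, rfl⟩ := p.surjective v
  refine ⟨s(p (t, 0), p (t, 1)), ⟨⟨t, rfl⟩, ?_⟩, ?_⟩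
  · fin_cases i <;> simp
  · rintro _ ⟨⟨t', rfl⟩, hv⟩
    rcases Sym2.mem_iff.mp hv with h | h <;> obtain ⟨rfl, -⟩ := Prod.ext_iff.mp (p.injective h)
    all_goals rfl

theorem not_isDiag_pair (p : Fin m × Fin 2 ≃ V) (t : Fin m) : ¬ s(p (t, 0), p (t, 1)).IsDiag := by
  simp [p.injective.eq_iff]

variable {α : Type*} [Preorder α] {f : Fin (m * 2) → α}

theorem Monotone.comp_finProdFinEquiv_zero_le_one (hf : Monotone f) (t : Fin m) :
    f (finProdFinEquiv (t, 0)) ≤ f (finProdFinEquiv (t, 1)) :=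
  hf (by simp [Fin.le_def])

theorem Monotone.pairwise_disjoint_Ioc_finProdFinEquiv (hf : Monotone f) :
    Pairwise (Disjoint on fun t : Fin m =>
      Set.Ioc (f (finProdFinEquiv (t, 0))) (f (finProdFinEquiv (t, 1)))) := by
  refine (pairwise_disjoint_on _).mpr fun t t' htt' => Set.Ioc_disjoint_Ioc_of_le (hf ?_)
  simp only [Fin.lt_def] at htt'
  simp [Fin.le_def]
  omega

end Pairing

theorem stmt9_general {V : Type*} [Fintype V] (G : SimpleGraph V)
    (k : ℕ) (heven : Even (Fintype.card V)) (hpw : pwLE G k) :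
    ∃ M : Finset (Sym2 V),
      (∀ e ∈ M, ¬ e.IsDiag) ∧
      (∀ v : V, ∃! e, e ∈ M ∧ v ∈ e) ∧
      pwLE (G ⊔ SimpleGraph.fromEdgeSet ↑M) (k + 1) := by
  classical
  obtain ⟨n, X, hX, hcard⟩ := hpw
  obtain ⟨last, hlast⟩ := exists_isLastBag hX.1
  obtain ⟨m, hm⟩ : ∃ m, Fintype.card V = m * 2 :=
    ⟨Fintype.card V / 2, (Nat.div_mul_cancel heven.two_dvd).symm⟩
  obtain ⟨e, he⟩ := exists_equiv_fin_monotone_comp last hm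
  let p : Fin m × Fin 2 ≃ V := finProdFinEquiv.trans e
  let M : Finset (Sym2 V) := univ.image fun t => s(p (t, 0), p (t, 1))
  have hM : (M : Set (Sym2 V)) = Set.range fun t => s(p (t, 0), p (t, 1)) := by
    simp [M]
  refine ⟨M, ?_, fun v => ?_, ?_⟩
  · simp only [M, mem_image, mem_univ, true_and]
    rintro _ ⟨t, rfl⟩
    exact not_isDiag_pair p t
  · simpa only [← mem_coe, hM] using existsUnique_mem_range_pair p v
  · rw [hM]
    exact pwLE_sup_fromEdgeSet_range _ _ hX hcard hlast he.comp_finProdFinEquiv_zero_le_one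
      he.pairwise_disjoint_Ioc_finProdFinEquiv

theorem stmt9 {V : Type*} [Fintype V] [DecidableEq V] (G : SimpleGraph V)
    (k : ℕ) (hk : 1 ≤ k) (heven : Even (Fintype.card V)) (hpw : pwLE G k) :
    ∃ M : Finset (Sym2 V),
      (∀ e ∈ M, ¬ e.IsDiag) ∧
      (∀ v : V, ∃! e, e ∈ M ∧ v ∈ e) ∧
      pwLE (G ⊔ SimpleGraph.fromEdgeSet ↑M) (k + 1) :=
  stmt9_general G k heven hpw
end

section
/- Let G be obtained from the disjoint union of a graph G₀ and, for each pair {u,v} in a partition of V(G₀) into pairs, a gadget Q_r (with identifications as in the construction), and suppose all added edges receive a new color λ' with c(λ',λ) = 0 for every color λ. Then G has an r-factor of reload cost 0 if and only if G₀ has a 2-factor of reload cost 0. -/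
open SimpleGraph Finset

/-- The reload cost of an edge-colored graph `H` with edge-coloring `χ` and
symmetric color-traversal cost `c`. -/
noncomputable def reloadCost {V X : Type*} [Fintype V] [DecidableEq V]
    (H : SimpleGraph V) (χ : Sym2 V → X) (c : X → X → ℕ)
    (hc : ∀ x y, c x y = c y x) : ℕ := by
  classical
  exact ∑ v : V,
    ∑ p ∈ (H.incidenceFinset v).sym2.filter (fun p => ¬ p.IsDiag),
      Sym2.lift ⟨fun e f => c (χ e) (χ f), fun e f => hc (χ e) (χ f)⟩ p

/-- The graph `G'` obtained from `G₀` by choosing a partition of `V(G₀)` into pairs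
`{a i, b i}` (indexed by `i : I`) and, for each pair, adding a copy of the gadget
`Q_r` (obtained from `K_{r+1}` by subdividing `r-2` edges twice and removing the
middle edges), identifying `r-2` of its degree-1 vertices with `a i` and the other
`r-2` with `b i`. -/
def Gprime {V I : Type*} (G : SimpleGraph V) (r : ℕ) (a b : I → V) :
    SimpleGraph (V ⊕ (I × Fin (r + 1))) :=
  SimpleGraph.fromRel (fun x y =>
    match x, y with
    | Sum.inl u, Sum.inl v => G.Adj u v
    | Sum.inr (i, x), Sum.inr (j, y) =>
        i = j ∧ x ≠ y ∧ ¬(y.val = x.val + 1 ∧ x.val < r - 2) ∧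
          ¬(x.val = y.val + 1 ∧ y.val < r - 2)
    | Sum.inl u, Sum.inr (i, x) =>
        (u = a i ∧ x.val < r - 2) ∨ (u = b i ∧ 1 ≤ x.val ∧ x.val ≤ r - 2)
    | _, _ => False)

/-! Every vertex of a gadget has degree exactly `r` in `Gprime G₀ r a b` (each removed middle edge
of `K_{r+1}` is compensated by an edge to `a i` or `b i`), so an `r`-factor must contain the whole
gadget, and then it is `Gprime H r a b` for the graph `H` it induces on `V`. A vertex `v` gets
`r - 2` gadget edges, so `H` is a `2`-factor. Gadget edges have the fresh color of cost `0`, so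
only pairs of old edges at an old vertex contribute to the reload cost, and these are the pairs of
edges of `H`. -/

lemma reloadCost_eq_zero_iff {V X : Type*} [Fintype V] [DecidableEq V]
    (H : SimpleGraph V) (χ : Sym2 V → X) (c : X → X → ℕ) (hc : ∀ x y, c x y = c y x) :
    reloadCost H χ c hc = 0 ↔
      ∀ v u w, H.Adj v u → H.Adj v w → u ≠ w → c (χ s(v, u)) (χ s(v, w)) = 0 := by
  classical
  simp only [reloadCost, Finset.sum_eq_zero_iff, Finset.mem_univ, true_implies]
  constructor
  · intro h v u w hu hw huw
    simpa using h v s(s(v, u), s(v, w)) (by simp [hu, hw, huw, hu.ne'])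
  · intro h v p hp
    induction p using Sym2.ind with
    | _ e f =>
      simp only [Finset.mem_filter, Finset.mk_mem_sym2_iff, Sym2.mk_isDiag_iff,
        mem_incidenceFinset] at hp
      obtain ⟨⟨⟨he, hve⟩, hf, hvf⟩, hef⟩ := hp
      obtain ⟨u, rfl⟩ := Sym2.mem_iff_exists.mp hve
      obtain ⟨w, rfl⟩ := Sym2.mem_iff_exists.mp hvf
      exact h v u w he hf (fun huw => hef (huw ▸ rfl))

lemma reloadCost_eq_zero_iff_comap_inl {V W X : Type*} [Fintype V] [DecidableEq V]
    [Fintype W] [DecidableEq W] (H : SimpleGraph (V ⊕ W))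
    (χ₀ : Sym2 V → X) (c₀ : X → X → ℕ) (hc₀ : ∀ x y, c₀ x y = c₀ y x)
    (χ : Sym2 (V ⊕ W) → Option X) (c : Option X → Option X → ℕ) (hc : ∀ x y, c x y = c y x)
    (hχold : ∀ u v : V, χ s(Sum.inl u, Sum.inl v) = some (χ₀ s(u, v)))
    (hχnew : ∀ e, (¬ ∃ u v : V, e = s(Sum.inl u, Sum.inl v)) → χ e = none)
    (hcold : ∀ x y : X, c (some x) (some y) = c₀ x y)
    (hcnew : ∀ x : Option X, c none x = 0) :
    reloadCost H χ c hc = 0 ↔ reloadCost (H.comap Sum.inl) χ₀ c₀ hc₀ = 0 := by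
  have hχinr (q : W) (y : V ⊕ W) : χ s(Sum.inr q, y) = none := hχnew _ (by simp)
  have hχinr' (q : W) (y : V ⊕ W) : χ s(y, Sum.inr q) = none := Sym2.eq_swap ▸ hχinr q y
  simp only [reloadCost_eq_zero_iff, comap_adj]
  constructor
  · intro h v u w hu hw huw
    simpa [hχold, hcold] using h _ _ _ hu hw (Sum.inl_injective.ne huw)
  · rintro h (v | q) y z hy hz hyz
    · rcases y with u | q
      · rcases z with w | q
        · rw [hχold, hχold, hcold]
          exact h v u w hy hz (fun huw => hyz (huw ▸ rfl))
        · rw [hχinr', hc, hcnew]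
      · rw [hχinr', hcnew]
    · rw [hχinr, hcnew]

lemma ncard_fin_val_preimage {n : ℕ} (s : Set ℕ) (hs : s ⊆ Set.Iio n) :
    (Fin.val ⁻¹' s : Set (Fin n)).ncard = s.ncard :=
  Set.ncard_preimage_of_injective_subset_range Fin.val_injective (Fin.range_val ▸ hs)

section Gprime

variable {V I : Type*} {G : SimpleGraph V} {r : ℕ} {a b : I → V}

@[simp]
lemma Gprime_adj_inl_inl {u v : V} :
    (Gprime G r a b).Adj (Sum.inl u) (Sum.inl v) ↔ G.Adj u v := by
  simp only [Gprime, fromRel_adj, ne_eq, Sum.inl.injEq, adj_comm G v u, or_self,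
    and_iff_right_iff_imp]
  exact G.ne_of_adj

@[simp]
lemma Gprime_adj_inl_inr {u : V} {i : I} {x : Fin (r + 1)} :
    (Gprime G r a b).Adj (Sum.inl u) (Sum.inr (i, x)) ↔
      (u = a i ∧ x.val < r - 2) ∨ (u = b i ∧ 1 ≤ x.val ∧ x.val ≤ r - 2) := by
  simp [Gprime]

@[simp]
lemma Gprime_adj_inr_inl {u : V} {i : I} {x : Fin (r + 1)} :
    (Gprime G r a b).Adj (Sum.inr (i, x)) (Sum.inl u) ↔
      (u = a i ∧ x.val < r - 2) ∨ (u = b i ∧ 1 ≤ x.val ∧ x.val ≤ r - 2) := by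
  rw [adj_comm, Gprime_adj_inl_inr]

@[simp]
lemma Gprime_adj_inr_inr {i j : I} {x y : Fin (r + 1)} :
    (Gprime G r a b).Adj (Sum.inr (i, x)) (Sum.inr (j, y)) ↔
      i = j ∧ x ≠ y ∧ ¬(y.val = x.val + 1 ∧ x.val < r - 2) ∧
        ¬(x.val = y.val + 1 ∧ y.val < r - 2) := by
  simp only [Gprime, fromRel_adj]
  grind

@[simp]
lemma Gprime_comap_inl : (Gprime G r a b).comap Sum.inl = G := by
  ext; simp

lemma Gprime_mono {G' : SimpleGraph V} (h : G ≤ G') : Gprime G r a b ≤ Gprime G' r a b := by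
  rintro (u | ⟨i, x⟩) (v | ⟨j, y⟩) huv
  · exact Gprime_adj_inl_inl.2 (h (Gprime_adj_inl_inl.1 huv))
  all_goals simpa using huv

lemma ncard_neighborSet_Gprime_inr {i : I} (hab : a i ≠ b i) (y : Fin (r + 1)) :
    ((Gprime G r a b).neighborSet (Sum.inr (i, y))).ncard = r := by
  -- `a i` takes the place of the neighbour `y + 1`, `b i` that of `y - 1`
  let f : Fin (r + 1) → V ⊕ (I × Fin (r + 1)) := fun z =>
    if z.val = y.val + 1 ∧ y.val < r - 2 then Sum.inl (a i)
    else if y.val = z.val + 1 ∧ z.val < r - 2 then Sum.inl (b i) else Sum.inr (i, z)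
  have himage : f '' {y}ᶜ = (Gprime G r a b).neighborSet (Sum.inr (i, y)) := by
    ext w
    simp only [Set.mem_image, Set.mem_compl_singleton_iff, mem_neighborSet]
    constructor
    · rintro ⟨z, hzy, rfl⟩
      simp only [f]
      split_ifs with h1 h2
      · simp [h1.2]
      · simp only [Gprime_adj_inr_inl, hab.symm, false_and, true_and, false_or]
        omega
      · simp only [Gprime_adj_inr_inr, true_and]
        exact ⟨Ne.symm hzy, h1, h2⟩
    · rcases w with u | ⟨j, z⟩
      · rw [Gprime_adj_inr_inl]
        rintro (⟨rfl, hy⟩ | ⟨rfl, hy⟩)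
        · refine ⟨⟨y.val + 1, by omega⟩, fun h => by simp [Fin.ext_iff] at h, ?_⟩
          simp [f, hy]
        · refine ⟨⟨y.val - 1, by omega⟩, fun h => by simp [Fin.ext_iff] at h; omega, ?_⟩
          simp only [f]
          rw [if_neg (by omega), if_pos (by omega)]
      · rw [Gprime_adj_inr_inr]
        rintro ⟨rfl, hyz, h1, h2⟩
        refine ⟨z, Ne.symm hyz, ?_⟩
        simp only [f]
        rw [if_neg h1, if_neg h2]
  have hinj : Set.InjOn f {y}ᶜ := by
    intro z hz z' hz' h
    simp only [f] at h
    split_ifs at h <;> simp only [Sum.inl.injEq, Sum.inr.injEq, Prod.mk.injEq, true_and] at h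
    all_goals first | exact Fin.ext (by omega) | exact absurd h hab | exact absurd h.symm hab
  rw [← himage, hinj.ncard_image, Set.ncard_compl, Set.ncard_singleton]
  simp

lemma ncard_gadget_neighbors_of_inl (hab : ∀ i, a i ≠ b i)
    (hpart : ∀ v : V, ∃! i, v = a i ∨ v = b i) (v : V) :
    {p : I × Fin (r + 1) | (v = a p.1 ∧ p.2.val < r - 2) ∨
      (v = b p.1 ∧ 1 ≤ p.2.val ∧ p.2.val ≤ r - 2)}.ncard = r - 2 := by
  obtain ⟨i, hi, huniq⟩ := hpart v
  have hfiber : {p : I × Fin (r + 1) | (v = a p.1 ∧ p.2.val < r - 2) ∨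
      (v = b p.1 ∧ 1 ≤ p.2.val ∧ p.2.val ≤ r - 2)} = {i} ×ˢ {x | (v = a i ∧ x.val < r - 2) ∨
      (v = b i ∧ 1 ≤ x.val ∧ x.val ≤ r - 2)} := by
    ext ⟨j, x⟩
    simp only [Set.mem_ofPred_eq, Set.mem_prod, Set.mem_singleton_iff]
    constructor
    · rintro (⟨hj, hx⟩ | ⟨hj, hx⟩) <;> obtain rfl := huniq j (by tauto) <;> tauto
    · rintro ⟨rfl, h⟩
      exact h
  rw [hfiber, Set.ncard_prod, Set.ncard_singleton, one_mul]
  rcases hi with rfl | rfl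
  · simp only [hab i, true_and, false_and, or_false]
    exact (ncard_fin_val_preimage (n := r + 1) _ (Set.Iio_subset_Iio (by omega))).trans
      (Set.ncard_Iio_nat _)
  · simp only [(hab i).symm, true_and, false_and, false_or]
    refine (ncard_fin_val_preimage (n := r + 1) (Set.Icc 1 (r - 2))
      (fun x hx => Set.mem_Iio.2 (by have := hx.2; omega))).trans ?_
    simp

lemma ncard_neighborSet_Gprime_inl [Finite V] [Finite I] (hab : ∀ i, a i ≠ b i)
    (hpart : ∀ v : V, ∃! i, v = a i ∨ v = b i) (v : V) :
    ((Gprime G r a b).neighborSet (Sum.inl v)).ncard = (G.neighborSet v).ncard + (r - 2) := by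
  rw [← Set.image_preimage_inl_union_image_preimage_inr ((Gprime G r a b).neighborSet _),
    Set.ncard_union_eq Set.disjoint_image_inl_image_inr,
    Set.ncard_image_of_injective _ Sum.inl_injective,
    Set.ncard_image_of_injective _ Sum.inr_injective, ← ncard_gadget_neighbors_of_inl hab hpart v]
  congr 2
  · ext; simp
  · ext ⟨i, y⟩; simp

lemma eq_Gprime_comap_inl {H : SimpleGraph (V ⊕ (I × Fin (r + 1)))}
    (hsat : ∀ q, H.neighborSet (Sum.inr q) = (Gprime G r a b).neighborSet (Sum.inr q)) :
    H = Gprime (H.comap Sum.inl) r a b := by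
  have hgadget (q x) : H.Adj (Sum.inr q) x ↔ (Gprime G r a b).Adj (Sum.inr q) x :=
    Set.ext_iff.1 (hsat q) x
  ext x y
  rcases x with u | ⟨i, x⟩ <;> rcases y with v | ⟨j, y⟩
  · simp
  · rw [adj_comm, hgadget, adj_comm]; simp
  all_goals rw [hgadget]; simp

end Gprime

theorem stmt18_general {V I X : Type*} [Fintype V] [DecidableEq V] [Fintype I] [DecidableEq I]
    (G₀ : SimpleGraph V) (r : ℕ) (hr : 2 ≤ r)
    -- the pairing of `V(G₀)`
    (a b : I → V) (hab : ∀ i, a i ≠ b i) (hpart : ∀ v : V, ∃! i, v = a i ∨ v = b i)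
    -- edge coloring and costs of `G₀`, with costs in `{0,1}`
    (χ₀ : Sym2 V → X) (c₀ : X → X → ℕ) (hc₀ : ∀ x y, c₀ x y = c₀ y x)
    -- the coloring of `G'`: old edges keep their color, all gadget edges get the
    -- fresh color `none` (the new color `λ'`)
    (χ' : Sym2 (V ⊕ (I × Fin (r + 1))) → Option X)
    (hχold : ∀ u v : V, χ' s(Sum.inl u, Sum.inl v) = some (χ₀ s(u, v)))
    (hχnew : ∀ e : Sym2 (V ⊕ (I × Fin (r + 1))),
      (¬ ∃ u v : V, e = s(Sum.inl u, Sum.inl v)) → χ' e = none)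
    -- the cost function of `G'`: it extends `c₀`, and the new color `none` has
    -- traversal cost `0` with every color
    (c' : Option X → Option X → ℕ) (hc' : ∀ x y, c' x y = c' y x)
    (hc'old : ∀ x y : X, c' (some x) (some y) = c₀ x y)
    (hc'new : ∀ x : Option X, c' none x = 0) :
    -- `G'` has an `r`-factor of reload cost `0` iff `G₀` has a `2`-factor of
    -- reload cost `0`
    (∃ H' : SimpleGraph (V ⊕ (I × Fin (r + 1))), H' ≤ Gprime G₀ r a b ∧
      (∀ x, (H'.neighborSet x).ncard = r) ∧ reloadCost H' χ' c' hc' = 0) ↔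
    (∃ H : SimpleGraph V, H ≤ G₀ ∧
      (∀ v, (H.neighborSet v).ncard = 2) ∧ reloadCost H χ₀ c₀ hc₀ = 0) := by
  have hcost (H' : SimpleGraph (V ⊕ (I × Fin (r + 1)))) :=
    reloadCost_eq_zero_iff_comap_inl H' χ₀ c₀ hc₀ χ' c' hc' hχold hχnew hc'old hc'new
  constructor
  · rintro ⟨H', hle, hdeg, hzero⟩
    have hsat (q : I × Fin (r + 1)) :
        H'.neighborSet (Sum.inr q) = (Gprime G₀ r a b).neighborSet (Sum.inr q) :=
      Set.eq_of_subset_of_ncard_le (fun _ h => hle h)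
        (by rw [ncard_neighborSet_Gprime_inr (hab q.1), hdeg]) (Set.toFinite _)
    refine ⟨H'.comap Sum.inl, fun u v h => Gprime_adj_inl_inl.1 (hle h), fun v => ?_,
      (hcost H').1 hzero⟩
    have := hdeg (Sum.inl v)
    rw [eq_Gprime_comap_inl hsat, ncard_neighborSet_Gprime_inl hab hpart] at this
    omega
  · rintro ⟨H, hle, hdeg, hzero⟩
    refine ⟨Gprime H r a b, Gprime_mono hle, ?_, by rwa [hcost, Gprime_comap_inl]⟩
    rintro (v | ⟨i, y⟩)
    · rw [ncard_neighborSet_Gprime_inl hab hpart, hdeg]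
      omega
    · exact ncard_neighborSet_Gprime_inr (hab i) y

theorem stmt18 {V I X : Type*} [Fintype V] [DecidableEq V] [Fintype I] [DecidableEq I]
    (G₀ : SimpleGraph V) (r : ℕ) (hr : 2 ≤ r)
    (heven : Even (Fintype.card V))
    (hΔ : ∀ u : V, (G₀.neighborSet u).ncard ≤ 4)
    -- the pairing of `V(G₀)`
    (a b : I → V) (hab : ∀ i, a i ≠ b i) (hpart : ∀ v : V, ∃! i, v = a i ∨ v = b i)
    -- edge coloring and costs of `G₀`, with costs in `{0,1}`
    (χ₀ : Sym2 V → X) (c₀ : X → X → ℕ) (hc₀ : ∀ x y, c₀ x y = c₀ y x)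
    (hc₀01 : ∀ x y, c₀ x y ≤ 1)
    -- the coloring of `G'`: old edges keep their color, all gadget edges get the
    -- fresh color `none` (the new color `λ'`)
    (χ' : Sym2 (V ⊕ (I × Fin (r + 1))) → Option X)
    (hχold : ∀ u v : V, χ' s(Sum.inl u, Sum.inl v) = some (χ₀ s(u, v)))
    (hχnew : ∀ e : Sym2 (V ⊕ (I × Fin (r + 1))),
      (¬ ∃ u v : V, e = s(Sum.inl u, Sum.inl v)) → χ' e = none)
    -- the cost function of `G'`: it extends `c₀`, and the new color `none` has
    -- traversal cost `0` with every color
    (c' : Option X → Option X → ℕ) (hc' : ∀ x y, c' x y = c' y x)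
    (hc'old : ∀ x y : X, c' (some x) (some y) = c₀ x y)
    (hc'new : ∀ x : Option X, c' none x = 0) :
    -- `G'` has an `r`-factor of reload cost `0` iff `G₀` has a `2`-factor of
    -- reload cost `0`
    (∃ H' : SimpleGraph (V ⊕ (I × Fin (r + 1))), H' ≤ Gprime G₀ r a b ∧
      (∀ x, (H'.neighborSet x).ncard = r) ∧ reloadCost H' χ' c' hc' = 0) ↔
    (∃ H : SimpleGraph V, H ≤ G₀ ∧
      (∀ v, (H.neighborSet v).ncard = 2) ∧ reloadCost H χ₀ c₀ hc₀ = 0) :=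
  stmt18_general G₀ r hr a b hab hpart χ₀ c₀ hc₀ χ' hχold hχnew c' hc' hc'old hc'new
end
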